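/- arXiv:2401.12263 — 3 statements merged into one kernel-verified Lean document; each statement's English description precedes it below -/
import Mathlib

section
/- Fix n ≥ 1, reals c_I, c_R, c_F, λ > 0, T > 0, a₁ > 0 with a₁ ≠ 1, a₂ > 0 with a₁a₂ ≠ 1, nonnegative reals c_{f,k}, c_k, α_k, β_k for k = 1,…,n, and a sequence of reals F_j(T), j = 1, 2, …. Define Q₀(N, T) = c_I/T + c_R/(N T) + ((a₁^N − 1)/((a₁ − 1) λ N T)) ∑_{k=1}^{n} c_{f,k} + (((a₁ a₂)^N − 1)/(λ N (a₁ a₂ − 1))) ∑_{k=1}^{n} c_k α_k β_k + (c_F/(λ N T)) ∑_{j=1}^{N} a₁^{j−1} F_j(T), and define D(N, T) = (1/(λ(a₁ − 1))) ∑_{k=1}^{n} c_{f,k} (N(a₁^{N+1} − a₁^N) − a₁^N + 1) + (T/(λ(a₁ a₂ − 1))) ∑_{k=1}^{n} c_k α_k β_k (N((a₁a₂)^{N+1} − (a₁a₂)^N) − (a₁a₂)^N + 1) + (c_F/λ)(N a₁^N F_{N+1}(T) − ∑_{j=1}^{N} a₁^{j−1} F_j(T)). Then for every positive integer N, Q₀(N+1,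 T) ≥ Q₀(N, T) if and only if c_R ≤ D(N, T). -/
open Finset

/-- With
`Q₀(N,T) = c_I/T + c_R/(NT) + ((a₁^N - 1)/((a₁-1)λNT)) ∑ c_{f,k}
  + (((a₁a₂)^N - 1)/(λN(a₁a₂-1))) ∑ c_k α_k β_k + (c_F/(λNT)) ∑_{j=1}^N a₁^{j-1} F_j(T)`
and `D(N,T)` as displayed, one has `Q₀(N+1,T) ≥ Q₀(N,T) ↔ c_R ≤ D(N,T)`. -/
theorem cost_rate_increasing_iff_replacement_cost_le
    (n : ℕ) (hn : 1 ≤ n) (cI cR cF lam T : ℝ) (hlam : 0 < lam) (hT : 0 < T)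
    (a₁ a₂ : ℝ) (ha₁pos : 0 < a₁) (ha₁ : a₁ ≠ 1) (ha₂pos : 0 < a₂) (ha : a₁ * a₂ ≠ 1)
    (cf c α β : Fin n → ℝ)
    (hcf : ∀ k, 0 ≤ cf k) (hc : ∀ k, 0 ≤ c k) (hα : ∀ k, 0 ≤ α k) (hβ : ∀ k, 0 ≤ β k)
    (F : ℕ → ℝ)
    (Q₀ : ℕ → ℝ)
    (hQ₀ : ∀ N : ℕ, Q₀ N =
      cI / T + cR / ((N : ℝ) * T) +
        ((a₁ ^ N - 1) / ((a₁ - 1) * lam * N * T)) * ∑ k, cf k +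
        (((a₁ * a₂) ^ N - 1) / (lam * N * (a₁ * a₂ - 1))) * ∑ k, c k * α k * β k +
        (cF / (lam * N * T)) * ∑ j ∈ Finset.Icc 1 N, a₁ ^ (j - 1) * F j)
    (D : ℕ → ℝ)
    (hD : ∀ N : ℕ, D N =
      (1 / (lam * (a₁ - 1))) *
          ∑ k, cf k * ((N : ℝ) * (a₁ ^ (N + 1) - a₁ ^ N) - a₁ ^ N + 1) +
        (T / (lam * (a₁ * a₂ - 1))) *
          ∑ k, c k * α k * β k *
            ((N : ℝ) * ((a₁ * a₂) ^ (N + 1) - (a₁ * a₂) ^ N) - (a₁ * a₂) ^ N + 1) +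
        (cF / lam) *
          ((N : ℝ) * a₁ ^ N * F (N + 1) - ∑ j ∈ Finset.Icc 1 N, a₁ ^ (j - 1) * F j)) :
    ∀ N : ℕ, 1 ≤ N → (Q₀ (N + 1) ≥ Q₀ N ↔ cR ≤ D N) := by
  intro N hN
  have hNpos : (0:ℝ) < N := by exact_mod_cast hN
  have hN1 : (0:ℝ) < (N:ℝ) + 1 := by positivity
  have ha₁' : a₁ - 1 ≠ 0 := sub_ne_zero.mpr ha₁
  have ha' : a₁ * a₂ - 1 ≠ 0 := sub_ne_zero.mpr ha
  have hG : ∑ j ∈ Finset.Icc 1 (N + 1), a₁ ^ (j - 1) * F j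
      = (∑ j ∈ Finset.Icc 1 N, a₁ ^ (j - 1) * F j) + a₁ ^ N * F (N + 1) := by
    rw [Finset.sum_Icc_succ_top (Nat.le_succ_of_le hN), Nat.add_sub_cancel]
  have hS1 : ∑ k, cf k * ((N : ℝ) * (a₁ ^ (N + 1) - a₁ ^ N) - a₁ ^ N + 1)
      = (∑ k, cf k) * ((N : ℝ) * (a₁ ^ (N + 1) - a₁ ^ N) - a₁ ^ N + 1) := by
    rw [← Finset.sum_mul]
  have hS2 : ∑ k, c k * α k * β k *
        ((N : ℝ) * ((a₁ * a₂) ^ (N + 1) - (a₁ * a₂) ^ N) - (a₁ * a₂) ^ N + 1)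
      = (∑ k, c k * α k * β k) *
        ((N : ℝ) * ((a₁ * a₂) ^ (N + 1) - (a₁ * a₂) ^ N) - (a₁ * a₂) ^ N + 1) := by
    rw [← Finset.sum_mul]
  have key : Q₀ (N + 1) - Q₀ N = (D N - cR) / ((N : ℝ) * ((N : ℝ) + 1) * T) := by
    rw [hQ₀, hQ₀, hD, hS1, hS2, hG]
    push_cast
    field_simp
    ring
  constructor
  · intro h
    have h0 : 0 ≤ (D N - cR) / ((N : ℝ) * ((N : ℝ) + 1) * T) := by
      rw [← key]; linarith
    have hd : (0:ℝ) < (N : ℝ) * ((N : ℝ) + 1) * T := by positivity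
    nlinarith [(le_div_iff₀ hd).mp h0]
  · intro h
    have hd : (0:ℝ) < (N : ℝ) * ((N : ℝ) + 1) * T := by positivity
    have h0 : 0 ≤ (D N - cR) / ((N : ℝ) * ((N : ℝ) + 1) * T) :=
      div_nonneg (by linarith) hd.le
    rw [← key] at h0; linarith
end

section
/- Fix n ≥ 1, reals c_I ≥ 0, c_F ≥ 0, λ > 0, T > 0, a₁ > 2, a₂ ≥ 1, nonnegative reals c_{f,k}, c_k, α_k, β_k for k = 1,…,n, and a sequence of reals F_j(T), j = 1, 2, …, that is nondecreasing in j and satisfies 0 ≤ F_j(T) ≤ 1 for all j. Define Q₀(N, T) = c_I/T + c_R/(N T) + ((a₁^N − 1)/((a₁ − 1) λ N T)) ∑_{k=1}^{n} c_{f,k} + (((a₁ a₂)^N − 1)/(λ N (a₁ a₂ − 1))) ∑_{k=1}^{n} c_k α_k β_k + (c_F/(λ N T)) ∑_{j=1}^{N} a₁^{j−1} F_j(T). If the replacement cost c_R satisfies c_R ≤ ((a₁ − 1)/λ) ∑_{k=1}^{n} c_{f,k}, then Q₀(N, T) is nondecreasing in N, i.e. Q₀(N+1, T) ≥ Q₀(N,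 T) for every positive integer N. -/
open Finset

private lemma key1 (x : ℝ) (hx : 2 ≤ x) : ∀ N : ℕ, 1 ≤ N →
    (x - 1) ^ 2 + (x ^ N - 1) ≤ (N : ℝ) * x ^ N * (x - 1) := by
  intro N
  induction N with
  | zero => intro h; omega
  | succ m ih =>
    intro _
    rcases Nat.eq_zero_or_pos m with hm | hm
    · subst hm; push_cast; nlinarith
    · have h := ih hm
      have hxm : (1 : ℝ) ≤ x ^ m := one_le_pow₀ (by linarith)
      have hmc : (1 : ℝ) ≤ (m : ℝ) := by exact_mod_cast hm
      push_cast
      rw [pow_succ x m]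
      nlinarith [mul_nonneg (mul_nonneg (by linarith : (0:ℝ) ≤ (m:ℝ)) (by linarith : (0:ℝ) ≤ x ^ m)) (by linarith : (0:ℝ) ≤ x - 2)]

private lemma key2 (A : ℝ) (hA : 1 ≤ A) : ∀ N : ℕ, 1 ≤ N →
    ((N : ℝ) + 1) * A ^ N ≤ (N : ℝ) * A ^ (N + 1) + 1 := by
  intro N
  induction N with
  | zero => intro h; omega
  | succ m ih =>
    intro _
    rcases Nat.eq_zero_or_pos m with hm | hm
    · subst hm; push_cast; nlinarith
    · have h := ih hm
      have hxm : (1 : ℝ) ≤ A ^ m := one_le_pow₀ hA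
      have hxm1 : (1 : ℝ) ≤ A ^ (m + 1) := one_le_pow₀ hA
      push_cast
      rw [pow_succ, pow_succ, pow_succ]
      rw [pow_succ] at h hxm1
      nlinarith [mul_nonneg (mul_nonneg (by positivity : (0:ℝ) ≤ A ^ m) (by linarith : (0:ℝ) ≤ A)) (by linarith : (0:ℝ) ≤ A - 1)]

set_option maxHeartbeats 1000000 in
/-- If `a₁ > 2`, `a₂ ≥ 1`, the `F_j(T)` are nondecreasing in `j` with
values in `[0,1]`, and the replacement cost satisfies
`c_R ≤ ((a₁ - 1)/λ) ∑_{k=1}^n c_{f,k}`, then the expected cost rate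
`Q₀(N,T) = c_I/T + c_R/(NT) + ((a₁^N - 1)/((a₁-1)λNT)) ∑ c_{f,k}
  + (((a₁a₂)^N - 1)/(λN(a₁a₂-1))) ∑ c_k α_k β_k + (c_F/(λNT)) ∑_{j=1}^N a₁^{j-1} F_j(T)`
is nondecreasing in `N`. -/
theorem cost_rate_nondecreasing_of_small_replacement_cost
    (n : ℕ) (hn : 1 ≤ n) (cI cF lam T : ℝ) (hcI : 0 ≤ cI) (hcF : 0 ≤ cF)
    (hlam : 0 < lam) (hT : 0 < T)
    (a₁ a₂ : ℝ) (ha₁ : 2 < a₁) (ha₂ : 1 ≤ a₂)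
    (cf c α β : Fin n → ℝ)
    (hcf : ∀ k, 0 ≤ cf k) (hc : ∀ k, 0 ≤ c k) (hα : ∀ k, 0 ≤ α k) (hβ : ∀ k, 0 ≤ β k)
    (F : ℕ → ℝ) (hFmono : ∀ i j : ℕ, i ≤ j → F i ≤ F j)
    (hF0 : ∀ j, 0 ≤ F j) (hF1 : ∀ j, F j ≤ 1)
    (cR : ℝ) (hcR : cR ≤ ((a₁ - 1) / lam) * ∑ k, cf k)
    (Q₀ : ℕ → ℝ)
    (hQ₀ : ∀ N : ℕ, Q₀ N =
      cI / T + cR / ((N : ℝ) * T) +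
        ((a₁ ^ N - 1) / ((a₁ - 1) * lam * N * T)) * ∑ k, cf k +
        (((a₁ * a₂) ^ N - 1) / (lam * N * (a₁ * a₂ - 1))) * ∑ k, c k * α k * β k +
        (cF / (lam * N * T)) * ∑ j ∈ Finset.Icc 1 N, a₁ ^ (j - 1) * F j) :
    ∀ N : ℕ, 1 ≤ N → Q₀ N ≤ Q₀ (N + 1) := by
  intro N hN
  have hNr : (1 : ℝ) ≤ (N : ℝ) := by exact_mod_cast hN
  have hNpos : (0 : ℝ) < (N : ℝ) := by linarith
  have hN1pos : (0 : ℝ) < (N : ℝ) + 1 := by linarith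
  have hx1 : (0 : ℝ) < a₁ - 1 := by linarith
  set Sf : ℝ := ∑ k, cf k with hSf
  set Sc : ℝ := ∑ k, c k * α k * β k with hSc
  have hSf0 : 0 ≤ Sf := Finset.sum_nonneg fun k _ => hcf k
  have hSc0 : 0 ≤ Sc := Finset.sum_nonneg fun k _ =>
    mul_nonneg (mul_nonneg (hc k) (hα k)) (hβ k)
  have hA : (2 : ℝ) < a₁ * a₂ := by nlinarith
  have hA1 : (0 : ℝ) < a₁ * a₂ - 1 := by linarith
  have hcR' : lam * cR ≤ (a₁ - 1) * Sf := by
    have := mul_le_mul_of_nonneg_left hcR hlam.le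
    calc lam * cR ≤ lam * ((a₁ - 1) / lam * Sf) := this
      _ = (a₁ - 1) * Sf := by field_simp
  -- term 2+3
  have h23 : cR / ((N : ℝ) * T) + ((a₁ ^ N - 1) / ((a₁ - 1) * lam * N * T)) * Sf ≤
      cR / (((N : ℝ) + 1) * T) + ((a₁ ^ (N + 1) - 1) / ((a₁ - 1) * lam * ((N : ℝ) + 1) * T)) * Sf := by
    have e1 : cR / ((N : ℝ) * T) + ((a₁ ^ N - 1) / ((a₁ - 1) * lam * N * T)) * Sf =
        (cR * ((a₁ - 1) * lam) + (a₁ ^ N - 1) * Sf) / ((a₁ - 1) * lam * N * T) := by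
      field_simp
    have e2 : cR / (((N : ℝ) + 1) * T) + ((a₁ ^ (N + 1) - 1) / ((a₁ - 1) * lam * ((N : ℝ) + 1) * T)) * Sf =
        (cR * ((a₁ - 1) * lam) + (a₁ ^ (N + 1) - 1) * Sf) / ((a₁ - 1) * lam * ((N : ℝ) + 1) * T) := by
      field_simp
    rw [e1, e2, div_le_div_iff₀ (by positivity) (by positivity)]
    have hk := key1 a₁ ha₁.le N hN
    have hsuff : (cR * ((a₁ - 1) * lam) + (a₁ ^ N - 1) * Sf) * ((N : ℝ) + 1) ≤
        (cR * ((a₁ - 1) * lam) + (a₁ ^ (N + 1) - 1) * Sf) * (N : ℝ) := by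
      have hz : (a₁ - 1) ^ 2 ≤ (N : ℝ) * a₁ ^ (N + 1) - ((N : ℝ) + 1) * a₁ ^ N + 1 := by
        rw [pow_succ a₁ N]; nlinarith
      nlinarith [mul_le_mul_of_nonneg_right hcR' (le_of_lt hx1),
        mul_le_mul_of_nonneg_left hz hSf0]
    calc (cR * ((a₁ - 1) * lam) + (a₁ ^ N - 1) * Sf) * ((a₁ - 1) * lam * ((N : ℝ) + 1) * T)
        = ((cR * ((a₁ - 1) * lam) + (a₁ ^ N - 1) * Sf) * ((N : ℝ) + 1)) * ((a₁ - 1) * lam * T) := by ring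
      _ ≤ ((cR * ((a₁ - 1) * lam) + (a₁ ^ (N + 1) - 1) * Sf) * (N : ℝ)) * ((a₁ - 1) * lam * T) := by
          exact mul_le_mul_of_nonneg_right hsuff (by positivity)
      _ = (cR * ((a₁ - 1) * lam) + (a₁ ^ (N + 1) - 1) * Sf) * ((a₁ - 1) * lam * (N : ℝ) * T) := by ring
  -- term 4
  have h4 : (((a₁ * a₂) ^ N - 1) / (lam * N * (a₁ * a₂ - 1))) * Sc ≤
      (((a₁ * a₂) ^ (N + 1) - 1) / (lam * ((N : ℝ) + 1) * (a₁ * a₂ - 1))) * Sc := by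
    rw [div_mul_eq_mul_div, div_mul_eq_mul_div,
      div_le_div_iff₀ (by positivity) (by positivity)]
    have hk := key2 (a₁ * a₂) (by linarith) N hN
    have hsuff : ((a₁ * a₂) ^ N - 1) * ((N : ℝ) + 1) ≤ ((a₁ * a₂) ^ (N + 1) - 1) * (N : ℝ) := by
      nlinarith
    calc ((a₁ * a₂) ^ N - 1) * Sc * (lam * ((N : ℝ) + 1) * (a₁ * a₂ - 1))
        = (((a₁ * a₂) ^ N - 1) * ((N : ℝ) + 1)) * (Sc * lam * (a₁ * a₂ - 1)) := by ring
      _ ≤ (((a₁ * a₂) ^ (N + 1) - 1) * (N : ℝ)) * (Sc * lam * (a₁ * a₂ - 1)) := by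
          exact mul_le_mul_of_nonneg_right hsuff (by positivity)
      _ = ((a₁ * a₂) ^ (N + 1) - 1) * Sc * (lam * (N : ℝ) * (a₁ * a₂ - 1)) := by ring
  -- term 5
  have h5 : (cF / (lam * N * T)) * (∑ j ∈ Finset.Icc 1 N, a₁ ^ (j - 1) * F j) ≤
      (cF / (lam * ((N : ℝ) + 1) * T)) * (∑ j ∈ Finset.Icc 1 (N + 1), a₁ ^ (j - 1) * F j) := by
    obtain ⟨G, hGdef⟩ : ∃ G, (∑ j ∈ Finset.Icc 1 N, a₁ ^ (j - 1) * F j) = G := ⟨_, rfl⟩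
    have hGsucc : ∑ j ∈ Finset.Icc 1 (N + 1), a₁ ^ (j - 1) * F j = G + a₁ ^ N * F (N + 1) := by
      rw [Finset.sum_Icc_succ_top (by omega : 1 ≤ N + 1), hGdef]
      norm_num
    have hGle : G ≤ (N : ℝ) * (a₁ ^ N * F (N + 1)) := by
      rw [← hGdef]
      have h := Finset.sum_le_sum (f := fun j => a₁ ^ (j - 1) * F j)
        (g := fun _ => a₁ ^ N * F (N + 1)) (s := Finset.Icc 1 N) ?_
      · simpa [Nat.card_Icc] using h
      · intro j hj
        rw [Finset.mem_Icc] at hj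
        have h1 : a₁ ^ (j - 1) ≤ a₁ ^ N :=
          pow_le_pow_right₀ (by linarith) (by omega)
        exact mul_le_mul h1 (hFmono j (N + 1) (by omega)) (hF0 j)
          (pow_nonneg (by linarith) N)
    have hG0 : 0 ≤ G := by
      rw [← hGdef]
      exact Finset.sum_nonneg fun j _ => mul_nonneg (pow_nonneg (by linarith) _) (hF0 j)
    rw [hGdef, hGsucc, div_mul_eq_mul_div, div_mul_eq_mul_div,
      div_le_div_iff₀ (by positivity) (by positivity)]
    have hsuff : G * ((N : ℝ) + 1) ≤ (G + a₁ ^ N * F (N + 1)) * (N : ℝ) := by nlinarith [hGle, hG0, hNr]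
    calc cF * G * (lam * ((N : ℝ) + 1) * T)
        = (G * ((N : ℝ) + 1)) * (cF * lam * T) := by ring
      _ ≤ ((G + a₁ ^ N * F (N + 1)) * (N : ℝ)) * (cF * lam * T) := by
          exact mul_le_mul_of_nonneg_right hsuff (by positivity)
      _ = cF * (G + a₁ ^ N * F (N + 1)) * (lam * (N : ℝ) * T) := by ring
  rw [hQ₀ N, hQ₀ (N + 1)]
  push_cast
  linarith [h23, h4, h5]
end

section
/- Fix a positive integer N, n ≥ 1, reals c_I, c_R, λ > 0, c_F > 0, a₁ > 0 with a₁ ≠ 1, a₂ > 0 with a₁a₂ ≠ 1, nonnegative reals c_{f,k}, c_k, α_k, β_k for k = 1,…,n, and functions F_j : (0,∞) → ℝ for j = 1,…,N. Define Q₀(T) = c_I/T + c_R/(N T) + ((a₁^N − 1)/((a₁ − 1) λ N T)) ∑_{k=1}^{n} c_{f,k} + (((a₁ a₂)^N − 1)/(λ N (a₁ a₂ − 1))) ∑_{k=1}^{n} c_k α_k β_k + (c_F/(λ N T)) ∑_{j=1}^{N} a₁^{j−1} F_j(T) for T > 0. If T* > 0 is a local minimum of Q₀ and each F_j is differentiable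 at T* with derivative f_j(T*), then ∑_{j=1}^{N} a₁^{j−1} ( f_j(T*) T* − F_j(T*) ) = (λ/c_F) ( N c_I + ((a₁^N − 1)/(λ(a₁ − 1))) ∑_{k=1}^{n} c_{f,k} + c_R ). -/
/-! Near `T*` the cost has the form `B + G(T) / T` with `G = A + C * ∑ a₁^(j-1) F_j`, so at an
interior minimum `T* G'(T*) = G(T*)`: the tangent to `G` at `T*` passes through the origin.
Solving this for the weighted sum gives the identity. -/

open Finset Filter Topology

theorem IsLocalMin.hasDerivAt_mul_eq_of_eventuallyEq_add_div {Q G : ℝ → ℝ} {B G' x : ℝ}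
    (hx : x ≠ 0) (hmin : IsLocalMin Q x) (hG : HasDerivAt G G' x)
    (hQ : Q =ᶠ[𝓝 x] fun T => B + G T / T) : G' * x = G x := by
  have hd : HasDerivAt (fun T => B + G T / T) ((G' * x - G x * 1) / x ^ 2) x :=
    (hG.div (hasDerivAt_id x) hx).const_add B
  have hcrit := hmin.hasDerivAt_eq_zero (hd.congr_of_eventuallyEq hQ)
  rw [div_eq_zero_iff, mul_one, sub_eq_zero] at hcrit
  exact hcrit.resolve_right (pow_ne_zero 2 hx)

theorem first_order_condition_optimal_inspection_interval_general
    (N : ℕ) (hN : 1 ≤ N) (n : ℕ)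
    (cI cR lam cF : ℝ) (hlam : 0 < lam) (hcF : 0 < cF)
    (a₁ a₂ : ℝ)
    (cf c α β : Fin n → ℝ)
    (F : ℕ → ℝ → ℝ) (f : ℕ → ℝ)
    (Q₀ : ℝ → ℝ)
    (hQ₀ : ∀ T : ℝ, 0 < T → Q₀ T =
      cI / T + cR / ((N : ℝ) * T) +
        ((a₁ ^ N - 1) / ((a₁ - 1) * lam * N * T)) * ∑ k, cf k +
        (((a₁ * a₂) ^ N - 1) / (lam * N * (a₁ * a₂ - 1))) * ∑ k, c k * α k * β k +
        (cF / (lam * N * T)) * ∑ j ∈ Finset.Icc 1 N, a₁ ^ (j - 1) * F j T)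
    (Tstar : ℝ) (hTstar : 0 < Tstar) (hmin : IsLocalMin Q₀ Tstar)
    (hderiv : ∀ j ∈ Finset.Icc 1 N, HasDerivAt (F j) (f j) Tstar) :
    ∑ j ∈ Finset.Icc 1 N, a₁ ^ (j - 1) * (f j * Tstar - F j Tstar) =
      (lam / cF) *
        ((N : ℝ) * cI + ((a₁ ^ N - 1) / (lam * (a₁ - 1))) * ∑ k, cf k + cR) := by
  set S : ℝ → ℝ := fun T => ∑ j ∈ Icc 1 N, a₁ ^ (j - 1) * F j T
  set S' := ∑ j ∈ Icc 1 N, a₁ ^ (j - 1) * f j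
  -- kept atomic: `ring` and `field_simp` cannot cancel through the denominator `a₁ - 1`
  set q := (a₁ ^ N - 1) / ((a₁ - 1) * lam)
  set A := cI + cR / N + q / N * ∑ k, cf k
  set C := cF / (lam * N)
  have hS : HasDerivAt S S' Tstar :=
    HasDerivAt.fun_sum fun j hj => (hderiv j hj).const_mul _
  have hQ : Q₀ =ᶠ[𝓝 Tstar] fun T =>
      ((a₁ * a₂) ^ N - 1) / (lam * N * (a₁ * a₂ - 1)) * ∑ k, c k * α k * β k +
        (A + C * S T) / T := by
    filter_upwards [Ioi_mem_nhds hTstar] with T hT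
    rw [hQ₀ T hT, show (a₁ ^ N - 1) / ((a₁ - 1) * lam * N * T) = q / N / T by
      rw [div_div, div_div, ← mul_assoc]]
    simp only [A, C, S]
    ring
  have hcrit := hmin.hasDerivAt_mul_eq_of_eventuallyEq_add_div hTstar.ne'
    ((hS.const_mul C).const_add A) hQ
  calc ∑ j ∈ Icc 1 N, a₁ ^ (j - 1) * (f j * Tstar - F j Tstar)
      = S' * Tstar - S Tstar := by
        simp only [S, S', mul_sub, sum_sub_distrib, sum_mul, mul_assoc]
    _ = A / C := by
      rw [eq_div_iff (by positivity)]
      linear_combination hcrit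
    _ = _ := by
      rw [show (a₁ ^ N - 1) / (lam * (a₁ - 1)) = q by rw [mul_comm lam]]
      simp only [A, C]
      field_simp
      ring

/-- First-order necessary condition for an interior optimal inspection
interval: if `T* > 0` is a local minimum of
`Q₀(T) = c_I/T + c_R/(NT) + ((a₁^N - 1)/((a₁-1)λNT)) ∑ c_{f,k}
  + (((a₁a₂)^N - 1)/(λN(a₁a₂-1))) ∑ c_k α_k β_k + (c_F/(λNT)) ∑_{j=1}^N a₁^{j-1} F_j(T)`
and each `F_j` is differentiable at `T*` with derivative `f_j(T*)`, then
`∑_{j=1}^N a₁^{j-1} (f_j(T*) T* - F_j(T*))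
  = (λ/c_F) (N c_I + ((a₁^N - 1)/(λ(a₁-1))) ∑ c_{f,k} + c_R)`. -/
theorem first_order_condition_optimal_inspection_interval
    (N : ℕ) (hN : 1 ≤ N) (n : ℕ) (hn : 1 ≤ n)
    (cI cR lam cF : ℝ) (hcI : 0 < cI) (hcR : 0 < cR) (hlam : 0 < lam) (hcF : 0 < cF)
    (a₁ a₂ : ℝ) (ha₁pos : 0 < a₁) (ha₁ : a₁ ≠ 1) (ha₂pos : 0 < a₂) (ha : a₁ * a₂ ≠ 1)
    (cf c α β : Fin n → ℝ)
    (hcf : ∀ k, 0 ≤ cf k) (hc : ∀ k, 0 ≤ c k) (hα : ∀ k, 0 ≤ α k) (hβ : ∀ k, 0 ≤ β k)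
    (F : ℕ → ℝ → ℝ) (f : ℕ → ℝ)
    (Q₀ : ℝ → ℝ)
    (hQ₀ : ∀ T : ℝ, 0 < T → Q₀ T =
      cI / T + cR / ((N : ℝ) * T) +
        ((a₁ ^ N - 1) / ((a₁ - 1) * lam * N * T)) * ∑ k, cf k +
        (((a₁ * a₂) ^ N - 1) / (lam * N * (a₁ * a₂ - 1))) * ∑ k, c k * α k * β k +
        (cF / (lam * N * T)) * ∑ j ∈ Finset.Icc 1 N, a₁ ^ (j - 1) * F j T)
    (Tstar : ℝ) (hTstar : 0 < Tstar) (hmin : IsLocalMin Q₀ Tstar)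
    (hderiv : ∀ j ∈ Finset.Icc 1 N, HasDerivAt (F j) (f j) Tstar) :
    ∑ j ∈ Finset.Icc 1 N, a₁ ^ (j - 1) * (f j * Tstar - F j Tstar) =
      (lam / cF) *
        ((N : ℝ) * cI + ((a₁ ^ N - 1) / (lam * (a₁ - 1))) * ∑ k, cf k + cR) :=
  first_order_condition_optimal_inspection_interval_general N hN n cI cR lam cF hlam hcF a₁ a₂ cf c
    α β F f Q₀ hQ₀ Tstar hTstar hmin hderiv
end
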